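/- Let f ∈ L¹(ℝ²) ∩ L^∞(ℝ²) with f ≥ 0, and define z(x) = (1/2π) ∫_{ℝ²} f(y) log(|x−y|/(1+|y|)) dy. Then z(x)/log|x| converges, as |x| → +∞, to γ = (1/2π) ∫_{ℝ²} f. -/

import Mathlib

/-!
Split the kernel as `log (‖x - y‖ / (1 + ‖y‖)) = logKernelFar x y - logKernelNear x y` (off the
null set `y = x`), where `logKernelNear x y = log⁺ ‖x - y‖⁻¹` carries the logarithmic
singularity. The near part is a translate of the integrable function `log⁺ ‖y‖⁻¹`, so its
integral against the bounded `f` stays bounded and disappears after division by `log ‖x‖`.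
The far part satisfies `|logKernelFar x y| ≤ log 2 + log (1 + ‖x‖) ≤ 3 log ‖x‖`, while for fixed
`y` it differs from `log ‖x‖` by a bounded amount; dominated convergence with majorant `3 |f|`
then gives the limit `∫ f`.
-/

open MeasureTheory Filter Topology Metric Real

noncomputable section LogKernel

variable {E : Type*} [NormedAddCommGroup E]

def logKernelFar (x y : E) : ℝ := log⁺ ‖x - y‖ - log (1 + ‖y‖)

def logKernelNear (x y : E) : ℝ := log⁺ ‖x - y‖⁻¹

theorem log_norm_sub_div_eq_logKernelFar_sub_logKernelNear {x y : E} (hxy : x ≠ y) :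
    log (‖x - y‖ / (1 + ‖y‖)) = logKernelFar x y - logKernelNear x y := by
  rw [logKernelFar, logKernelNear, log_div (norm_ne_zero_iff.2 (sub_ne_zero.2 hxy))
    (by positivity), ← posLog_sub_posLog_inv]
  ring

theorem logKernelNear_nonneg (x y : E) : 0 ≤ logKernelNear x y := posLog_nonneg

theorem logKernelNear_eq_comp_sub (x : E) : logKernelNear x = fun y => log⁺ ‖y - x‖⁻¹ :=
  funext fun y => by rw [logKernelNear, norm_sub_rev]

theorem abs_logKernelFar_le (x y : E) : |logKernelFar x y| ≤ log 2 + log (1 + ‖x‖) := by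
  have hx : log⁺ (1 + ‖x‖) = log (1 + ‖x‖) :=
    posLog_eq_log (by rw [abs_of_nonneg (by positivity)]; linarith [norm_nonneg x])
  have hy : log⁺ (1 + ‖y‖) = log (1 + ‖y‖) :=
    posLog_eq_log (by rw [abs_of_nonneg (by positivity)]; linarith [norm_nonneg y])
  have hupper : log⁺ ‖x - y‖ ≤ log⁺ (1 + ‖x‖) + log⁺ (1 + ‖y‖) := by
    refine (posLog_le_posLog (norm_nonneg _) ?_).trans posLog_mul
    nlinarith [norm_sub_le x y, norm_nonneg x, norm_nonneg y]
  have hlower : log⁺ (1 + ‖y‖) ≤ log 2 + log⁺ (1 + ‖x‖) + log⁺ ‖x - y‖ := by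
    refine (posLog_le_posLog (by positivity) ?_).trans posLog_add
    linarith [norm_sub_norm_le y x, norm_sub_rev x y]
  rw [logKernelFar, abs_le]
  constructor <;> linarith [posLog_nonneg (x := 1 + ‖y‖), log_nonneg one_le_two]

theorem abs_logKernelFar_sub_log_le (y : E) {x : E} (hx : 1 ≤ ‖x‖) :
    |logKernelFar x y - log ‖x‖| ≤ log 2 + log⁺ ‖y‖ + log (1 + ‖y‖) := by
  have hx' : log⁺ ‖x‖ = log ‖x‖ := posLog_eq_log (by rwa [abs_norm])
  have h₁ := posLog_norm_add_le x (-y)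
  have h₂ := posLog_norm_add_le (x - y) y
  rw [← sub_eq_add_neg, norm_neg] at h₁
  rw [sub_add_cancel] at h₂
  have : 0 ≤ log (1 + ‖y‖) := log_nonneg (by linarith [norm_nonneg y])
  rw [logKernelFar, abs_le]
  constructor <;> linarith

end LogKernel

theorem tendsto_div_of_abs_sub_le {α : Type*} {l : Filter α} {u g : α → ℝ} {C : ℝ}
    (hg : Tendsto g l atTop) (h : ∀ᶠ x in l, |u x - g x| ≤ C) :
    Tendsto (fun x => u x / g x) l (𝓝 1) := by
  have hquot : Tendsto (fun x => (u x - g x) / g x) l (𝓝 0) :=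
    tendsto_bdd_div_atTop_nhds_zero (h.mono fun _ hx => (abs_le.1 hx).1)
      (h.mono fun _ hx => (abs_le.1 hx).2) hg
  rw [← add_zero (1 : ℝ)]
  refine (hquot.const_add 1).congr' ?_
  filter_upwards [hg.eventually_ne_atTop 0] with x hx
  field_simp
  ring

theorem tendsto_log_norm_comap_atTop {E : Type*} [Norm E] :
    Tendsto (fun x : E => log ‖x‖) (comap norm atTop) atTop :=
  tendsto_log_atTop.comp tendsto_comap

theorem log_two_add_log_one_add_le {t : ℝ} (ht : 2 ≤ t) : log 2 + log (1 + t) ≤ 3 * log t := by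
  have h₁ : log (1 + t) ≤ log 2 + log t := by
    rw [← log_mul two_ne_zero (by positivity)]
    exact log_le_log (by positivity) (by linarith)
  have h₂ : log 2 ≤ log t := log_le_log two_pos ht
  linarith

section Far

variable {E : Type*} [NormedAddCommGroup E] [MeasurableSpace E] [BorelSpace E]
  {μ : Measure E} {f : E → ℝ}

theorem measurable_logKernelFar (x : E) : Measurable (logKernelFar x) := by
  unfold logKernelFar
  fun_prop

theorem integrable_mul_logKernelFar (hf : Integrable f μ) (x : E) :
    Integrable (fun y => f y * logKernelFar x y) μ :=
  hf.mul_bdd (measurable_logKernelFar x).aestronglyMeasurable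
    (ae_of_all _ fun y => abs_logKernelFar_le x y)

theorem tendsto_integral_mul_logKernelFar_div_log (hf : Integrable f μ) :
    Tendsto (fun x => (∫ y, f y * logKernelFar x y ∂μ) / log ‖x‖) (comap norm atTop)
      (𝓝 (∫ y, f y ∂μ)) := by
  simp_rw [← integral_div]
  refine tendsto_integral_filter_of_dominated_convergence (fun y => 3 * ‖f y‖)
    (Eventually.of_forall fun x =>
      ((integrable_mul_logKernelFar hf x).div_const _).aestronglyMeasurable) ?_
    (hf.norm.const_mul 3) (ae_of_all _ fun y => ?_)
  · filter_upwards [tendsto_comap.eventually (eventually_ge_atTop 2)] with x hx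
    refine ae_of_all _ fun y => ?_
    have hlog : 0 < log ‖x‖ := log_pos (by linarith)
    rw [norm_div, norm_mul, Real.norm_of_nonneg hlog.le, div_le_iff₀ hlog]
    calc ‖f y‖ * ‖logKernelFar x y‖ ≤ ‖f y‖ * (3 * log ‖x‖) := by
          gcongr
          exact (abs_logKernelFar_le x y).trans (log_two_add_log_one_add_le hx)
      _ = 3 * ‖f y‖ * log ‖x‖ := by ring
  · have hratio := tendsto_div_of_abs_sub_le tendsto_log_norm_comap_atTop
      ((tendsto_comap.eventually (eventually_ge_atTop 1)).mono fun x hx =>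
        abs_logKernelFar_sub_log_le y hx)
    simpa only [mul_div_assoc, mul_one] using hratio.const_mul (f y)

end Far

section Near

variable {E : Type*} [NormedAddCommGroup E] [MeasurableSpace E] [BorelSpace E] (μ : Measure E)

theorem integral_logKernelNear [μ.IsAddRightInvariant] (x : E) :
    ∫ y, logKernelNear x y ∂μ = ∫ y, log⁺ ‖y‖⁻¹ ∂μ := by
  rw [logKernelNear_eq_comp_sub]
  exact integral_sub_right_eq_self (fun y => log⁺ ‖y‖⁻¹) x

variable [NormedSpace ℝ E] [FiniteDimensional ℝ E] [Nontrivial E] [μ.IsAddHaarMeasure]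

theorem integrable_posLog_norm_inv : Integrable (fun y : E => log⁺ ‖y‖⁻¹) μ := by
  have hd : 1 ≤ Module.finrank ℝ E := Module.finrank_pos
  have hball : IntegrableOn (fun y : E => log⁺ ‖y‖⁻¹) (ball 0 1) μ := by
    refine integrableOn_ball_of_norm_le_rpow hd (C := 2) (α := 1 / 2)
      (by linarith [show (1 : ℝ) ≤ Module.finrank ℝ E by exact_mod_cast hd])
      (ae_of_all _ fun y => ?_) (by fun_prop)
    rw [Real.norm_of_nonneg posLog_nonneg, posLog_apply]
    refine max_le (by positivity) ?_
    calc log ‖y‖⁻¹ ≤ ‖y‖⁻¹ ^ (1 / 2 : ℝ) / (1 / 2) := log_le_rpow_div (by positivity) (by norm_num)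
      _ = 2 * ‖y‖ ^ (-(1 / 2 : ℝ)) := by
        rw [inv_rpow (norm_nonneg _), rpow_neg (norm_nonneg _)]
        ring
  refine hball.integrable_of_forall_notMem_eq_zero fun y hy => ?_
  rw [posLog_eq_zero_iff, abs_inv, abs_norm]
  exact inv_le_one_of_one_le₀ (by simpa using hy)

theorem integrable_logKernelNear (x : E) : Integrable (logKernelNear x) μ := by
  rw [logKernelNear_eq_comp_sub]
  exact (integrable_posLog_norm_inv μ).comp_sub_right x

variable {μ} {f : E → ℝ} {M : ℝ}

theorem integrable_mul_logKernelNear (hf : AEStronglyMeasurable f μ)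
    (hf_bdd : ∀ᵐ y ∂μ, ‖f y‖ ≤ M) (x : E) :
    Integrable (fun y => f y * logKernelNear x y) μ :=
  (integrable_logKernelNear μ x).bdd_mul hf hf_bdd

theorem abs_integral_mul_logKernelNear_le (hf_bdd : ∀ᵐ y ∂μ, ‖f y‖ ≤ M) (x : E) :
    |∫ y, f y * logKernelNear x y ∂μ| ≤ M * ∫ y, log⁺ ‖y‖⁻¹ ∂μ := by
  rw [← integral_logKernelNear μ x, ← integral_const_mul, ← Real.norm_eq_abs]
  refine norm_integral_le_of_norm_le ((integrable_logKernelNear μ x).const_mul M) ?_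
  filter_upwards [hf_bdd] with y hy
  rw [norm_mul, Real.norm_of_nonneg (logKernelNear_nonneg x y)]
  exact mul_le_mul_of_nonneg_right hy (logKernelNear_nonneg x y)

theorem tendsto_integral_mul_logKernelNear_div_log (hf_bdd : ∀ᵐ y ∂μ, ‖f y‖ ≤ M) :
    Tendsto (fun x => (∫ y, f y * logKernelNear x y ∂μ) / log ‖x‖) (comap norm atTop) (𝓝 0) :=
  tendsto_bdd_div_atTop_nhds_zero
    (Eventually.of_forall fun x => (abs_le.1 (abs_integral_mul_logKernelNear_le hf_bdd x)).1)
    (Eventually.of_forall fun x => (abs_le.1 (abs_integral_mul_logKernelNear_le hf_bdd x)).2)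
    tendsto_log_norm_comap_atTop

theorem tendsto_integral_mul_log_norm_sub_div_log (hf : Integrable f μ)
    (hf_bdd : ∀ᵐ y ∂μ, ‖f y‖ ≤ M) :
    Tendsto (fun x => (∫ y, f y * log (‖x - y‖ / (1 + ‖y‖)) ∂μ) / log ‖x‖) (comap norm atTop)
      (𝓝 (∫ y, f y ∂μ)) := by
  have hsplit : ∀ x, ∫ y, f y * log (‖x - y‖ / (1 + ‖y‖)) ∂μ =
      (∫ y, f y * logKernelFar x y ∂μ) - ∫ y, f y * logKernelNear x y ∂μ := by
    intro x
    rw [← integral_sub (integrable_mul_logKernelFar hf x)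
      (integrable_mul_logKernelNear hf.1 hf_bdd x)]
    refine integral_congr_ae ?_
    filter_upwards [μ.ae_ne x] with y hy
    rw [log_norm_sub_div_eq_logKernelFar_sub_logKernelNear hy.symm, mul_sub]
  simpa only [hsplit, sub_div, sub_zero] using
    (tendsto_integral_mul_logKernelFar_div_log hf).sub
      (tendsto_integral_mul_logKernelNear_div_log hf_bdd)

end Near

theorem stmt_3 (f : EuclideanSpace ℝ (Fin 2) → ℝ)
    (hf_int : Integrable f) (hf_nonneg : ∀ y, 0 ≤ f y)
    (M : ℝ) (hf_bdd : ∀ y, f y ≤ M) :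
    Tendsto
      (fun x : EuclideanSpace ℝ (Fin 2) =>
        ((1 / (2 * Real.pi)) * ∫ y, f y * Real.log (‖x - y‖ / (1 + ‖y‖))) /
          Real.log ‖x‖)
      (Filter.comap norm Filter.atTop)
      (nhds ((1 / (2 * Real.pi)) * ∫ y, f y)) := by
  have hf_bdd' : ∀ᵐ y, ‖f y‖ ≤ M :=
    ae_of_all _ fun y => (Real.norm_of_nonneg (hf_nonneg y)).trans_le (hf_bdd y)
  simpa only [mul_div_assoc] using
    (tendsto_integral_mul_log_norm_sub_div_log hf_int hf_bdd').const_mul (1 / (2 * π))
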